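/- arXiv:2312.01489 — 3 statements merged into one kernel-verified Lean document; each statement's English description precedes it below -/
import Mathlib

section
/- Let (I, d) be a finite metric space, S a natural number, and a : I × I → ℤ a matrix with a(i,j) ∈ {0,1} for all i,j, satisfying: (c1) Σ_{i∈I} a(i,i) = S; (c2) Σ_{j∈I} a(i,j) = 1 for every i ∈ I; (c3) a(i,j) ≤ a(j,j) for all i,j ∈ I; (c4) d(i,j₁)·a(i,j₁) ≤ d(i,j₂)·a(j₂,j₂) + d(i,j₁)·(1 − a(j₂,j₂)) for all i, j₁, j₂ ∈ I. Define G = {i ∈ I : a(i,i) = 1} and, for each i ∈ G, V_i = {j ∈ I : a(j,i) = 1}. Then the collection 𝒱 = {V_i : i ∈ G} is a discrete tessellation of I induced by G, the sets V_i for distinct i ∈ G are distinct, i ∈ V_i for each i ∈ G, and |G| = S (so 𝒱 consists of exactly S nonempty subsets). -/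
/-!
A binary matrix with row sums one is the graph of an assignment `f : I → I`, with
`a (i, j) = 1 ↔ f i = j`. Constraint (c3) forces every station to be assigned to a
generator, generators are assigned to themselves, and (c4) for `j₁ = f i` and a generator
`j₂` says `d(i, f i) ≤ d(i, j₂)`. The zones are then the fibres of a retraction onto `G`
that sends every point to a nearest point of `G`, and such fibres always form a discrete
tessellation induced by `G`.
-/

/-- A collection `𝒱` of subsets of a finite metric space (the whole type `I`) is the
discrete tessellation induced by `G` if: (1) distinct members are disjoint; (2) the
members cover the space; (3) every member contains exactly one element of `G` (its
generator); (4) every element of a member is at least as close to its generator as to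
any other element of `G`. -/
def IsDiscreteTessellation {I : Type*} [MetricSpace I] (G : Set I)
    (𝒱 : Set (Set I)) : Prop :=
  (∀ V ∈ 𝒱, ∀ U ∈ 𝒱, V ≠ U → V ∩ U = ∅) ∧
  ⋃₀ 𝒱 = Set.univ ∧
  (∀ V ∈ 𝒱, ∃ c, V ∩ G = {c}) ∧
  (∀ V ∈ 𝒱, ∀ c, V ∩ G = {c} → ∀ v ∈ V, ∀ k ∈ G, dist v c ≤ dist v k)

theorem natCast_ncard_setOf_eq_one {ι R : Type*} [Fintype ι] [AddCommMonoidWithOne R]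
    {w : ι → R} (hw : ∀ x, w x = 0 ∨ w x = 1) :
    (({x | w x = 1} : Set ι).ncard : R) = ∑ x, w x := by
  classical
  rw [Set.ncard_eq_toFinset_card', Set.toFinset_ofPred, Finset.natCast_card_filter]
  refine Finset.sum_congr rfl fun x _ => ?_
  rcases hw x with h | h <;> split_ifs <;> simp_all

theorem exists_eq_one_iff_of_sum_eq_one {ι R : Type*} [Fintype ι] [AddCommMonoidWithOne R]
    [CharZero R] {w : ι → R} (hw : ∀ x, w x = 0 ∨ w x = 1) (hsum : ∑ x, w x = 1) :
    ∃ j, ∀ x, w x = 1 ↔ x = j := by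
  have hcard : ({x | w x = 1} : Set ι).ncard = 1 := by
    exact_mod_cast (natCast_ncard_setOf_eq_one hw).trans hsum
  obtain ⟨j, hj⟩ := Set.ncard_eq_one.mp hcard
  exact ⟨j, fun x => Set.ext_iff.mp hj x⟩

theorem exists_forall_eq_one_iff_apply_eq {ι κ R : Type*} [Fintype κ]
    [AddCommMonoidWithOne R] [CharZero R] {a : ι → κ → R}
    (hbin : ∀ i j, a i j = 0 ∨ a i j = 1) (hrow : ∀ i, ∑ j, a i j = 1) :
    ∃ f : ι → κ, ∀ i j, a i j = 1 ↔ f i = j := by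
  choose f hf using fun i => exists_eq_one_iff_of_sum_eq_one (hbin i) (hrow i)
  exact ⟨f, fun i j => (hf i j).trans eq_comm⟩

section Fibres

variable {I : Type*} {G : Set I} {f : I → I}

theorem preimage_singleton_inter_eq_singleton (hfix : ∀ g ∈ G, f g = g) {g : I}
    (hg : g ∈ G) : f ⁻¹' {g} ∩ G = {g} := by
  ext x
  constructor
  · rintro ⟨hx, hxG⟩
    exact (hfix x hxG).symm.trans hx
  · rintro rfl
    exact ⟨hfix x hg, hg⟩

theorem injOn_preimage_singleton (hfix : ∀ g ∈ G, f g = g) :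
    Set.InjOn (fun g => f ⁻¹' {g}) G := fun g hg h _ (hgh : f ⁻¹' {g} = f ⁻¹' {h}) => by
  have hmem : g ∈ f ⁻¹' {h} := hgh ▸ hfix g hg
  exact (hfix g hg).symm.trans hmem

theorem isDiscreteTessellation_image_preimage_singleton [MetricSpace I]
    (hmaps : ∀ i, f i ∈ G) (hfix : ∀ g ∈ G, f g = g)
    (hnear : ∀ v, ∀ k ∈ G, dist v (f v) ≤ dist v k) :
    IsDiscreteTessellation G ((fun g => f ⁻¹' {g}) '' G) := by
  refine ⟨?_, ?_, ?_, ?_⟩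
  · rintro _ ⟨g, -, rfl⟩ _ ⟨h, -, rfl⟩ hne
    have hgh : g ≠ h := fun hgh => hne (hgh ▸ rfl)
    exact Set.disjoint_iff_inter_eq_empty.mp
      (Set.disjoint_singleton.mpr hgh |>.preimage f)
  · exact Set.eq_univ_of_forall fun x => ⟨f ⁻¹' {f x}, ⟨f x, hmaps x, rfl⟩, rfl⟩
  · rintro _ ⟨g, hg, rfl⟩
    exact ⟨g, preimage_singleton_inter_eq_singleton hfix hg⟩
  · rintro _ ⟨g, hg, rfl⟩ c hc v hv k hk
    have hcg : c = g := Set.singleton_eq_singleton_iff.mp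
      (hc.symm.trans (preimage_singleton_inter_eq_singleton hfix hg))
    rw [hcg, ← hv]
    exact hnear v k hk

end Fibres

/-- Correctness (forward direction) of the binary linear formulation `𝒯`: a binary
matrix `a` satisfying the constraints (c1)–(c4) induces, via its generators
`G = {i : a i i = 1}` and zones `Vᵢ = {j : a j i = 1}` for `i ∈ G`, a discrete
tessellation with exactly `S` distinct zones, each containing its generator. -/
theorem isDiscreteTessellation_of_binary_formulation {I : Type*} [Fintype I]
    [MetricSpace I] (S : ℕ) (a : I × I → ℤ)
    (hbin : ∀ i j, a (i, j) = 0 ∨ a (i, j) = 1)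
    (hc1 : ∑ i, a (i, i) = (S : ℤ))
    (hc2 : ∀ i, ∑ j, a (i, j) = 1)
    (hc3 : ∀ i j, a (i, j) ≤ a (j, j))
    (hc4 : ∀ i j₁ j₂, dist i j₁ * (a (i, j₁) : ℝ) ≤
      dist i j₂ * (a (j₂, j₂) : ℝ) + dist i j₁ * (1 - (a (j₂, j₂) : ℝ))) :
    IsDiscreteTessellation {i : I | a (i, i) = 1}
        ((fun i => {j : I | a (j, i) = 1}) '' {i : I | a (i, i) = 1}) ∧
      (∀ i ∈ {i : I | a (i, i) = 1}, ∀ j ∈ {i : I | a (i, i) = 1}, i ≠ j →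
        {k : I | a (k, i) = 1} ≠ {k : I | a (k, j) = 1}) ∧
      (∀ i ∈ {i : I | a (i, i) = 1}, i ∈ {j : I | a (j, i) = 1}) ∧
      ({i : I | a (i, i) = 1}).ncard = S := by
  obtain ⟨f, hf⟩ := exists_forall_eq_one_iff_apply_eq (a := fun i j => a (i, j)) hbin hc2
  have hassign : ∀ i, a (i, f i) = 1 := fun i => (hf i (f i)).mpr rfl
  have hzone : ∀ i, {j | a (j, i) = 1} = f ⁻¹' {i} := fun i => Set.ext fun j => hf j i
  have hfix : ∀ g ∈ {i | a (i, i) = 1}, f g = g := fun g hg => (hf g g).mp hg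
  have hmaps : ∀ i, f i ∈ {i | a (i, i) = 1} := fun i =>
    (hbin (f i) (f i)).resolve_left fun h0 => by linarith [hc3 i (f i), hassign i]
  have hnear : ∀ v, ∀ k ∈ {i | a (i, i) = 1}, dist v (f v) ≤ dist v k := by
    intro v k hk
    simpa [hassign v, Set.mem_ofPred_eq.mp hk] using hc4 v (f v) k
  simp only [hzone]
  exact ⟨isDiscreteTessellation_image_preimage_singleton hmaps hfix hnear,
    fun i hi j hj hne h => hne (injOn_preimage_singleton hfix hi hj h), hfix,
    by exact_mod_cast (natCast_ncard_setOf_eq_one fun i => hbin i i).trans hc1⟩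
end

section
/- Let (I, d) be a finite metric space, G ⊆ I with |G| = S, and 𝒱 a discrete tessellation of I induced by G. Define a : I × I → ℤ by a(i,j) = 1 if there exists V ∈ 𝒱 with i ∈ V and V ∩ G = {j}, and a(i,j) = 0 otherwise. Then a takes values in {0,1} and satisfies all constraints of the integer formulation: (c1) Σ_{i∈I} a(i,i) = S; (c2) Σ_{j∈I} a(i,j) = 1 for every i ∈ I; (c3) a(i,j) ≤ a(j,j) for all i,j ∈ I; (c4) d(i,j₁)·a(i,j₁) ≤ d(i,j₂)·a(j₂,j₂) + d(i,j₁)·(1 − a(j₂,j₂)) for all i, j₁, j₂ ∈ I. -/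
def InZone {I : Type*} (𝒱 : Set (Set I)) (G : Set I) (i j : I) : Prop :=
  ∃ V ∈ 𝒱, i ∈ V ∧ V ∩ G = {j}

section

variable {I : Type*} {𝒱 : Set (Set I)} {G : Set I} {i j : I}

theorem InZone.generator_mem (h : InZone 𝒱 G i j) : j ∈ G := by
  obtain ⟨V, -, -, hVG⟩ := h
  exact (hVG ▸ Set.mem_singleton j : j ∈ V ∩ G).2

theorem InZone.self (h : InZone 𝒱 G i j) : InZone 𝒱 G j j := by
  obtain ⟨V, hV, -, hVG⟩ := h
  exact ⟨V, hV, (hVG ▸ Set.mem_singleton j : j ∈ V ∩ G).1, hVG⟩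

end

namespace IsDiscreteTessellation

variable {I : Type*} [MetricSpace I] {G : Set I} {𝒱 : Set (Set I)}

open scoped Classical

theorem existsUnique_inZone (h : IsDiscreteTessellation G 𝒱) (i : I) :
    ∃! j, InZone 𝒱 G i j := by
  obtain ⟨hdisj, hcover, hgen, -⟩ := h
  obtain ⟨V, hV, hiV⟩ : i ∈ ⋃₀ 𝒱 := hcover ▸ Set.mem_univ i
  obtain ⟨c, hc⟩ := hgen V hV
  refine ⟨c, ⟨V, hV, hiV, hc⟩, fun j ⟨U, hU, hiU, hUG⟩ => ?_⟩
  obtain rfl : U = V := by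
    by_contra hUV
    exact (hdisj U hU V hV hUV).subset ⟨hiU, hiV⟩
  exact Set.singleton_eq_singleton_iff.mp (hUG.symm.trans hc)

theorem inZone_self_iff (h : IsDiscreteTessellation G 𝒱) {i : I} :
    InZone 𝒱 G i i ↔ i ∈ G := by
  refine ⟨InZone.generator_mem, fun hiG => ?_⟩
  obtain ⟨j, ⟨V, hV, hiV, hVG⟩, -⟩ := h.existsUnique_inZone i
  obtain rfl : i = j := (hVG ▸ (⟨hiV, hiG⟩ : i ∈ V ∩ G) : i ∈ ({j} : Set I))
  exact ⟨V, hV, hiV, hVG⟩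

theorem dist_le_of_inZone (h : IsDiscreteTessellation G 𝒱) {i j k : I}
    (hij : InZone 𝒱 G i j) (hk : k ∈ G) : dist i j ≤ dist i k := by
  obtain ⟨V, hV, hiV, hVG⟩ := hij
  exact h.2.2.2 V hV j hVG i hiV k hk

theorem dist_mul_ite_le (h : IsDiscreteTessellation G 𝒱) (i j₁ j₂ : I) :
    dist i j₁ * (if InZone 𝒱 G i j₁ then 1 else 0 : ℝ) ≤
      dist i j₂ * (if InZone 𝒱 G j₂ j₂ then 1 else 0) +
        dist i j₁ * (1 - if InZone 𝒱 G j₂ j₂ then 1 else 0) := by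
  by_cases hj₂ : InZone 𝒱 G j₂ j₂ <;> by_cases hij₁ : InZone 𝒱 G i j₁
  · simpa [hij₁, hj₂] using h.dist_le_of_inZone hij₁ hj₂.generator_mem
  all_goals simp [hij₁, hj₂]

variable [Fintype I]

theorem sum_ite_inZone_self (h : IsDiscreteTessellation G 𝒱) :
    ∑ i, (if InZone 𝒱 G i i then 1 else 0 : ℤ) = G.ncard := by
  simp [h.inZone_self_iff, Finset.sum_boole, Set.ncard_eq_toFinset_card']

theorem sum_ite_inZone (h : IsDiscreteTessellation G 𝒱) (i : I) :
    ∑ j, (if InZone 𝒱 G i j then 1 else 0 : ℤ) = 1 := by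
  obtain ⟨j₀, hj₀, huniq⟩ := h.existsUnique_inZone i
  have hiff : ∀ j, InZone 𝒱 G i j ↔ j = j₀ := fun j => ⟨huniq j, fun hj => hj ▸ hj₀⟩
  simp only [hiff, Finset.sum_ite_eq', Finset.mem_univ, if_true]

end IsDiscreteTessellation

/-- Completeness (converse direction) of the binary linear formulation `𝒯`: every
discrete tessellation with exactly `S` zones yields, via the indicator matrix
`a i j = 1 ↔ i` belongs to the zone with generator `j`, a feasible binary solution of
the formulation, i.e. `a` is binary and satisfies the constraints (c1)–(c4). -/
theorem binary_formulation_of_isDiscreteTessellation {I : Type*} [Fintype I]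
    [MetricSpace I] (S : ℕ) (G : Set I) (hGcard : G.ncard = S)
    (𝒱 : Set (Set I)) (h𝒱 : IsDiscreteTessellation G 𝒱)
    (a : I × I → ℤ)
    (ha1 : ∀ i j, (∃ V ∈ 𝒱, i ∈ V ∧ V ∩ G = {j}) → a (i, j) = 1)
    (ha0 : ∀ i j, ¬ (∃ V ∈ 𝒱, i ∈ V ∧ V ∩ G = {j}) → a (i, j) = 0) :
    (∀ i j, a (i, j) = 0 ∨ a (i, j) = 1) ∧
    (∑ i, a (i, i) = (S : ℤ)) ∧
    (∀ i, ∑ j, a (i, j) = 1) ∧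
    (∀ i j, a (i, j) ≤ a (j, j)) ∧
    (∀ i j₁ j₂, dist i j₁ * (a (i, j₁) : ℝ) ≤
      dist i j₂ * (a (j₂, j₂) : ℝ) + dist i j₁ * (1 - (a (j₂, j₂) : ℝ))) := by
  classical
  have ha : ∀ i j, a (i, j) = if InZone 𝒱 G i j then 1 else 0 := fun i j => by
    split_ifs with hij
    exacts [ha1 i j hij, ha0 i j hij]
  refine ⟨fun i j => ?_, ?_, fun i => ?_, fun i j => ?_, fun i j₁ j₂ => ?_⟩
  · rw [ha]
    split_ifs <;> simp
  · simp only [ha, h𝒱.sum_ite_inZone_self, hGcard]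
  · simp only [ha, h𝒱.sum_ite_inZone]
  · by_cases hij : InZone 𝒱 G i j
    · simp [ha, hij, hij.self]
    · rw [ha, ha, if_neg hij]
      split_ifs <;> simp
  · simp only [ha]
    push_cast
    exact h𝒱.dist_mul_ite_le i j₁ j₂
end

section
/- Let (I, d) be a finite metric space, G ⊆ I with |G| = S ≥ 1, and 𝒱 a discrete tessellation of I induced by G. For i ∈ I, let c be the generator of the zone containing i (i.e., i ∈ V for some V ∈ 𝒱 and V ∩ G = {c}). Then the number of points of I at distance at least d(i,c) from i is at least S: |{k ∈ I : d(i,c) ≤ d(i,k)}| ≥ S. In particular, c is not among the S − 1 points of I farthest from i. -/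
theorem IsDiscreteTessellation.subset_setOf_dist_generator_le {I : Type*} [MetricSpace I]
    {G : Set I} {𝒱 : Set (Set I)} (h𝒱 : IsDiscreteTessellation G 𝒱)
    {V : Set I} (hV : V ∈ 𝒱) {c : I} (hc : V ∩ G = {c}) {i : I} (hiV : i ∈ V) :
    G ⊆ {k : I | dist i c ≤ dist i k} :=
  fun _ hk => h𝒱.2.2.2 V hV c hc i hiV _ hk

theorem generator_not_among_farthest_general {I : Type*} [Fintype I] [MetricSpace I]
    (G : Set I) (S : ℕ) (hGcard : G.ncard = S)
    (𝒱 : Set (Set I)) (h𝒱 : IsDiscreteTessellation G 𝒱)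
    (i : I) (V : Set I) (hV : V ∈ 𝒱) (hiV : i ∈ V) (c : I) (hc : V ∩ G = {c}) :
    S ≤ ({k : I | dist i c ≤ dist i k}).ncard :=
  hGcard ▸ Set.ncard_le_ncard (h𝒱.subset_setOf_dist_generator_le hV hc hiV)

/-- Justification of the valid inequalities of Section 5.1.2: in a discrete
tessellation with `S ≥ 1` zones, if `c` is the generator of the zone containing `i`,
then at least `S` points of the space are at distance at least `d(i,c)` from `i`;
in particular `i` cannot be assigned to one of the `S − 1` farthest points. -/
theorem generator_not_among_farthest {I : Type*} [Fintype I] [MetricSpace I]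
    (G : Set I) (S : ℕ) (hS : 1 ≤ S) (hGcard : G.ncard = S)
    (𝒱 : Set (Set I)) (h𝒱 : IsDiscreteTessellation G 𝒱)
    (i : I) (V : Set I) (hV : V ∈ 𝒱) (hiV : i ∈ V) (c : I) (hc : V ∩ G = {c}) :
    S ≤ ({k : I | dist i c ≤ dist i k}).ncard :=
  generator_not_among_farthest_general G S hGcard 𝒱 h𝒱 i V hV hiV c hc
end
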